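/- arXiv:2501.11002 — 2 statements merged into one kernel-verified Lean document; each statement's English description precedes it below -/
import Mathlib

section
/- Let E be a real Hilbert space, F : E → ℝ differentiable, bounded below with infimum F* attained, and suppose F satisfies the Polyak–Łojasiewicz inequality with constant μ > 0: ‖∇F(θ)‖² ≥ 2μ(F(θ) − F*) for all θ ∈ E, and ∇F is L-Lipschitz (L > 0). Fix θ ∈ E and a step size η with 0 ≤ η ≤ 1/L and μ·η ≤ 1. Let g : Ω → E be an integrable random vector with E[g] = ∇F(θ) and E[‖g − ∇F(θ)‖²] ≤ σ². Then E[F(θ − η • g)] − F* ≤ (1 − μη)·(F(θ) − F*) + (L·η²/2)·σ². -/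
/-!
The descent lemma for an `L`-smooth `F` bounds `F (θ - η • g)` pointwise by a quadratic in `g`.
Taking expectations, unbiasedness kills the cross term and the bias–variance decomposition
`E‖g‖² = ‖∇F θ‖² + E‖g - ∇F θ‖²` gives
`E[F (θ - η • g)] ≤ F θ - η (1 - L η / 2) ‖∇F θ‖² + (L η² / 2) E‖g - ∇F θ‖²`.
Since `L η ≤ 1`, the coefficient `η (1 - L η / 2)` is at least `η / 2`, and the PL inequality turns
`(η / 2) ‖∇F θ‖²` into `μ η (F θ - F*)`.
-/

open MeasureTheory InnerProductSpace

section Descent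

variable {E : Type*} [NormedAddCommGroup E] [InnerProductSpace ℝ E] [CompleteSpace E]
  {F : E → ℝ} {L : ℝ}

theorem HasGradientAt.hasDerivAt_comp_add_smul {x d g : E} {t : ℝ}
    (h : HasGradientAt F g (x + t • d)) :
    HasDerivAt (fun s : ℝ => F (x + s • d)) ⟪g, d⟫_ℝ t := by
  have hline : HasDerivAt (fun s : ℝ => x + s • d) d t := by
    simpa using ((hasDerivAt_id t).smul_const d).const_add x
  rw [hasGradientAt_iff_hasFDerivAt] at h
  have hcomp := h.comp_hasDerivAt t hline
  rw [toDual_apply_apply] at hcomp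
  exact hcomp

theorem inner_gradient_add_smul_sub_le
    (hlip : ∀ x y : E, ‖gradient F x - gradient F y‖ ≤ L * ‖x - y‖) (x d : E) {t : ℝ}
    (ht : 0 ≤ t) :
    ⟪gradient F (x + t • d) - gradient F x, d⟫_ℝ ≤ L * t * ‖d‖ ^ 2 :=
  calc ⟪gradient F (x + t • d) - gradient F x, d⟫_ℝ
      ≤ ‖gradient F (x + t • d) - gradient F x‖ * ‖d‖ := real_inner_le_norm _ _
    _ ≤ L * ‖x + t • d - x‖ * ‖d‖ := by gcongr; exact hlip _ _
    _ = L * t * ‖d‖ ^ 2 := by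
      rw [add_sub_cancel_left, norm_smul, Real.norm_of_nonneg ht]; ring

theorem le_add_inner_gradient_add_sq (hF : Differentiable ℝ F)
    (hlip : ∀ x y : E, ‖gradient F x - gradient F y‖ ≤ L * ‖x - y‖) (x y : E) :
    F y ≤ F x + ⟪gradient F x, y - x⟫_ℝ + L / 2 * ‖y - x‖ ^ 2 := by
  set d := y - x
  set ψ : ℝ → ℝ := fun t => F (x + t • d) - t * ⟪gradient F x, d⟫_ℝ - L / 2 * ‖d‖ ^ 2 * t ^ 2
  have hψ : ∀ t, HasDerivAt ψ
      (⟪gradient F (x + t • d) - gradient F x, d⟫_ℝ - L * ‖d‖ ^ 2 * t) t := by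
    intro t
    have hsq := (hasDerivAt_pow 2 t).const_mul (L / 2 * ‖d‖ ^ 2)
    refine ((((hF _).hasGradientAt.hasDerivAt_comp_add_smul).sub
      (hasDerivAt_mul_const _)).sub hsq).congr_deriv ?_
    rw [inner_sub_left]; ring
  have hanti : AntitoneOn ψ (Set.Icc 0 1) :=
    antitoneOn_of_hasDerivWithinAt_nonpos (convex_Icc 0 1)
      (HasDerivAt.continuousOn fun t _ => hψ t) (fun t _ => (hψ t).hasDerivWithinAt)
      fun t ht => by
        rw [interior_Icc] at ht
        linarith [inner_gradient_add_smul_sub_le hlip x d ht.1.le]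
  have h01 := hanti (by simp) (by simp) zero_le_one
  simp only [ψ, d, one_smul, add_sub_cancel, zero_smul, add_zero] at h01
  linarith

end Descent

section BiasVariance

variable {Ω E : Type*} [MeasurableSpace Ω] {μ : Measure Ω} [NormedAddCommGroup E]
  [InnerProductSpace ℝ E] {g : Ω → E}

theorem norm_sq_eq_norm_sub_sq_add_inner_add (a m : E) :
    ‖a‖ ^ 2 = ‖a - m‖ ^ 2 + 2 * ⟪m, a - m⟫_ℝ + ‖m‖ ^ 2 := by
  rw [real_inner_comm, ← norm_add_sq_real, sub_add_cancel]

theorem MeasureTheory.Integrable.norm_sq_of_norm_sub_sq [IsFiniteMeasure μ]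
    (hg : Integrable g μ) (m : E) (hvar : Integrable (fun ω => ‖g ω - m‖ ^ 2) μ) :
    Integrable (fun ω => ‖g ω‖ ^ 2) μ :=
  ((hvar.add (((hg.sub (integrable_const m)).const_inner m).const_mul 2)).add
    (integrable_const (‖m‖ ^ 2))).congr
    (.of_forall fun ω => (norm_sq_eq_norm_sub_sq_add_inner_add (g ω) m).symm)

theorem integral_norm_sq_eq_add_integral_norm_sub_sq [CompleteSpace E] [IsProbabilityMeasure μ]
    {m : E} (hg : Integrable g μ) (hmean : ∫ ω, g ω ∂μ = m)
    (hvar : Integrable (fun ω => ‖g ω - m‖ ^ 2) μ) :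
    ∫ ω, ‖g ω‖ ^ 2 ∂μ = ‖m‖ ^ 2 + ∫ ω, ‖g ω - m‖ ^ 2 ∂μ := by
  have hcentered : Integrable (fun ω => g ω - m) μ := hg.sub (integrable_const m)
  have hcross_int : Integrable (fun ω => 2 * ⟪m, g ω - m⟫_ℝ) μ :=
    (hcentered.const_inner m).const_mul 2
  have hsum : Integrable (fun ω => ‖g ω - m‖ ^ 2 + 2 * ⟪m, g ω - m⟫_ℝ) μ := hvar.add hcross_int
  have hcross : ∫ ω, ⟪m, g ω - m⟫_ℝ ∂μ = 0 := by
    rw [integral_inner hcentered, integral_sub hg (integrable_const m), hmean, integral_const,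
      probReal_univ, one_smul, sub_self, inner_zero_right]
  calc ∫ ω, ‖g ω‖ ^ 2 ∂μ
      = ∫ ω, (‖g ω - m‖ ^ 2 + 2 * ⟪m, g ω - m⟫_ℝ + ‖m‖ ^ 2) ∂μ := by
        simp_rw [norm_sq_eq_norm_sub_sq_add_inner_add (g _) m]
    _ = ‖m‖ ^ 2 + ∫ ω, ‖g ω - m‖ ^ 2 ∂μ := by
        rw [integral_add hsum (integrable_const _), integral_add hvar hcross_int,
          integral_const_mul, hcross, integral_const, probReal_univ, one_smul]
        ring

end BiasVariance

theorem integral_comp_sub_smul_le {E Ω : Type*} [NormedAddCommGroup E] [InnerProductSpace ℝ E]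
    [CompleteSpace E] [MeasurableSpace Ω] {μ : Measure Ω} [IsProbabilityMeasure μ]
    {F : E → ℝ} {L : ℝ} (hF : Differentiable ℝ F)
    (hlip : ∀ x y : E, ‖gradient F x - gradient F y‖ ≤ L * ‖x - y‖) (θ : E) (η : ℝ)
    {g : Ω → E} (hg : Integrable g μ) (hmean : ∫ ω, g ω ∂μ = gradient F θ)
    (hvar : Integrable (fun ω => ‖g ω - gradient F θ‖ ^ 2) μ)
    (hstep : Integrable (fun ω => F (θ - η • g ω)) μ) :
    ∫ ω, F (θ - η • g ω) ∂μ ≤ F θ - η * (1 - L * η / 2) * ‖gradient F θ‖ ^ 2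
      + L * η ^ 2 / 2 * ∫ ω, ‖g ω - gradient F θ‖ ^ 2 ∂μ := by
  set v := gradient F θ
  have hpointwise : ∀ ω, F (θ - η • g ω) ≤ F θ - η * ⟪v, g ω⟫_ℝ + L * η ^ 2 / 2 * ‖g ω‖ ^ 2 := by
    intro ω
    have h := le_add_inner_gradient_add_sq hF hlip θ (θ - η • g ω)
    rw [sub_sub_cancel_left, inner_neg_right, real_inner_smul_right, norm_neg, norm_smul,
      mul_pow, Real.norm_eq_abs, sq_abs] at h
    linarith
  have hinner : Integrable (fun ω => η * ⟪v, g ω⟫_ℝ) μ := (hg.const_inner v).const_mul η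
  have hsq : Integrable (fun ω => L * η ^ 2 / 2 * ‖g ω‖ ^ 2) μ :=
    (hg.norm_sq_of_norm_sub_sq v hvar).const_mul _
  have hlinear : Integrable (fun ω => F θ - η * ⟪v, g ω⟫_ℝ) μ := (integrable_const _).sub hinner
  calc ∫ ω, F (θ - η • g ω) ∂μ
      ≤ ∫ ω, (F θ - η * ⟪v, g ω⟫_ℝ + L * η ^ 2 / 2 * ‖g ω‖ ^ 2) ∂μ :=
        integral_mono hstep (hlinear.add hsq) hpointwise
    _ = F θ - η * ⟪v, v⟫_ℝ + L * η ^ 2 / 2 * (‖v‖ ^ 2 + ∫ ω, ‖g ω - v‖ ^ 2 ∂μ) := by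
        rw [integral_add hlinear hsq,
          integral_sub (integrable_const _) hinner, integral_const, probReal_univ, one_smul,
          integral_const_mul, integral_const_mul, integral_inner hg, hmean,
          integral_norm_sq_eq_add_integral_norm_sub_sq hg hmean hvar]
    _ = _ := by rw [real_inner_self_eq_norm_sq]; ring

theorem one_step_pl_contraction_general
    {E : Type*} [NormedAddCommGroup E] [InnerProductSpace ℝ E] [CompleteSpace E]
    (F : E → ℝ) (hF : Differentiable ℝ F)
    (L : ℝ) (hL : 0 < L)
    (hlip : ∀ x y : E, ‖gradient F x - gradient F y‖ ≤ L * ‖x - y‖)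
    (μ : ℝ)
    (Fstar : ℝ)
    (hPL : ∀ x : E, 2 * μ * (F x - Fstar) ≤ ‖gradient F x‖ ^ 2)
    (θ : E) (η : ℝ) (hη0 : 0 ≤ η) (hηL : η ≤ 1 / L)
    {Ωs : Type*} [MeasureSpace Ωs]
    (hprob : IsProbabilityMeasure (volume : Measure Ωs))
    (g : Ωs → E) (σ : ℝ)
    (hg_int : Integrable g)
    (hg_sq_int : Integrable (fun ω => ‖g ω - gradient F θ‖ ^ 2))
    (hF_int : Integrable (fun ω => F (θ - η • g ω)))
    (hg_mean : ∫ ω, g ω = gradient F θ)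
    (hg_var : ∫ ω, ‖g ω - gradient F θ‖ ^ 2 ≤ σ ^ 2) :
    (∫ ω, F (θ - η • g ω)) - Fstar
      ≤ (1 - μ * η) * (F θ - Fstar) + (L * η ^ 2 / 2) * σ ^ 2 := by
  have hdescent := integral_comp_sub_smul_le hF hlip θ η hg_int hg_mean hg_sq_int hF_int
  have hLη : L * η ≤ 1 := by rwa [le_div_iff₀ hL, mul_comm] at hηL
  have hPLθ : 0 ≤ η * (‖gradient F θ‖ ^ 2 - 2 * μ * (F θ - Fstar)) :=
    mul_nonneg hη0 (sub_nonneg.mpr (hPL θ))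
  have hsmall_step : 0 ≤ η * (1 - L * η) * ‖gradient F θ‖ ^ 2 :=
    mul_nonneg (mul_nonneg hη0 (sub_nonneg.mpr hLη)) (sq_nonneg _)
  have hnoise : L * η ^ 2 / 2 * ∫ ω, ‖g ω - gradient F θ‖ ^ 2 ≤ L * η ^ 2 / 2 * σ ^ 2 :=
    mul_le_mul_of_nonneg_left hg_var (by positivity)
  linarith

/-- One-step function-gap contraction under the Polyak–Łojasiewicz inequality:
if `F` is differentiable with `L`-Lipschitz gradient, attains its infimum `F*`,
satisfies the PL inequality `‖∇F(θ)‖² ≥ 2μ (F(θ) - F*)` with `μ > 0`, and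
`0 ≤ η ≤ 1/L`, `μ η ≤ 1`, then for an unbiased stochastic gradient `g` at `θ`
with variance at most `σ²`,
`E[F(θ - η g)] - F* ≤ (1 - μ η)(F(θ) - F*) + (L η² / 2) σ²`. -/
theorem one_step_pl_contraction
    {E : Type*} [NormedAddCommGroup E] [InnerProductSpace ℝ E] [CompleteSpace E]
    (F : E → ℝ) (hF : Differentiable ℝ F)
    (L : ℝ) (hL : 0 < L)
    (hlip : ∀ x y : E, ‖gradient F x - gradient F y‖ ≤ L * ‖x - y‖)
    (μ : ℝ) (hμ : 0 < μ)
    (Fstar : ℝ) (hlb : ∀ x, Fstar ≤ F x) (hattain : ∃ x, F x = Fstar)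
    (hPL : ∀ x : E, 2 * μ * (F x - Fstar) ≤ ‖gradient F x‖ ^ 2)
    (θ : E) (η : ℝ) (hη0 : 0 ≤ η) (hηL : η ≤ 1 / L) (hημ : μ * η ≤ 1)
    {Ωs : Type*} [MeasureSpace Ωs]
    (hprob : IsProbabilityMeasure (volume : Measure Ωs))
    (g : Ωs → E) (σ : ℝ)
    (hg_int : Integrable g)
    (hg_sq_int : Integrable (fun ω => ‖g ω - gradient F θ‖ ^ 2))
    (hF_int : Integrable (fun ω => F (θ - η • g ω)))
    (hg_mean : ∫ ω, g ω = gradient F θ)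
    (hg_var : ∫ ω, ‖g ω - gradient F θ‖ ^ 2 ≤ σ ^ 2) :
    (∫ ω, F (θ - η • g ω)) - Fstar
      ≤ (1 - μ * η) * (F θ - Fstar) + (L * η ^ 2 / 2) * σ ^ 2 :=
  one_step_pl_contraction_general F hF L hL hlip μ Fstar hPL θ η hη0 hηL hprob g σ hg_int hg_sq_int
    hF_int hg_mean hg_var
end

section
/- Let E be a real Hilbert space, F : E → ℝ differentiable with L-Lipschitz gradient (L > 0), attaining its infimum F* and satisfying the Polyak–Łojasiewicz inequality ‖∇F(θ)‖² ≥ 2μ(F(θ) − F*) with constant μ > 0. Fix 0 < η ≤ min(1/L, 1/(2μ)). Let θ^0, θ^1, … : Ω → E and g^0, g^1, … : Ω → E be random vectors on a probability space with θ^{t+1} = θ^t − η • g^t for all t, the conditional expectation of g^t given σ(θ^0,…,θ^t) equal to ∇F(θ^t) almost surely, and conditional variance E[‖g^t − ∇F(θ^t)‖² | σ(θ^0,…,θ^t)] ≤ σ² almost surely (all stated integrability holding), with θ^0 deterministic. Then for every t, E[F(θ^t)] − F* ≤ (1 − μη)^t·(F(θ^0) − F*) + L·η·σ²/(2μ). 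-/
/-!
For an `L`-smooth `F` the descent lemma bounds `F (θ - η • g)` by a quadratic in `g`. Writing
`g = ∇F θ + noise`, the cross term has mean zero because the noise is conditionally centred given a
σ-algebra for which `∇F θ` is measurable, and the noise has second moment at most `σ²`. With
`η L ≤ 1` and the PL inequality this yields the contraction
`Δ (t + 1) ≤ (1 - μ η) Δ t + L η² σ² / 2` for the gap `Δ t = E F(θ^t) - F*`, and unrolling it
against the fixed point `L η σ² / (2 μ)` gives the bound.
-/

open MeasureTheory
open scoped RealInnerProductSpace NNReal

theorem le_pow_mul_add_of_forall_lt_succ_le {a : ℕ → ℝ} {ρ c b : ℝ} (hρ : 0 ≤ ρ) (hb₀ : 0 ≤ b)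
    (hb : ρ * b + c ≤ b) {n : ℕ} (h : ∀ t < n, a (t + 1) ≤ ρ * a t + c) :
    a n ≤ ρ ^ n * a 0 + b := by
  induction n with
  | zero => simpa using hb₀
  | succ n ih =>
    have ih := ih fun t ht => h t (ht.trans n.lt_succ_self)
    calc a (n + 1) ≤ ρ * a n + c := h n n.lt_succ_self
      _ ≤ ρ * (ρ ^ n * a 0 + b) + c := by gcongr
      _ = ρ ^ (n + 1) * a 0 + (ρ * b + c) := by ring
      _ ≤ ρ ^ (n + 1) * a 0 + b := by linarith

section Smooth

variable {E : Type*} [NormedAddCommGroup E] [InnerProductSpace ℝ E] [CompleteSpace E]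
  {F : E → ℝ} {K : ℝ≥0}

theorem hasDerivAt_comp_add_smul_gradient (hF : Differentiable ℝ F) (x v : E) (s : ℝ) :
    HasDerivAt (fun s : ℝ => F (x + s • v)) ⟪gradient F (x + s • v), v⟫ s := by
  have hline : HasDerivAt (fun s : ℝ => x + s • v) v s := by
    simpa using ((hasDerivAt_id s).smul_const v).const_add x
  simpa [Function.comp_def] using
    (hasGradientAt_iff_hasFDerivAt.mp (hF _).hasGradientAt).comp_hasDerivAt s hline

theorem image_add_le_of_lipschitzWith_gradient (hF : Differentiable ℝ F)
    (hlip : LipschitzWith K (gradient F)) (x v : E) :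
    F (x + v) ≤ F x + ⟪gradient F x, v⟫ + K / 2 * ‖v‖ ^ 2 := by
  have hB : ∀ s, HasDerivAt (fun s : ℝ => F x + s * ⟪gradient F x, v⟫ + K / 2 * s ^ 2 * ‖v‖ ^ 2)
      (⟪gradient F x, v⟫ + K * s * ‖v‖ ^ 2) s := fun s => by
    refine ((((hasDerivAt_id s).mul_const ⟪gradient F x, v⟫).const_add (F x)).add
      (((hasDerivAt_pow 2 s).const_mul ((K : ℝ) / 2)).mul_const (‖v‖ ^ 2))).congr_deriv ?_
    push_cast; ring
  have hbound : ∀ s ∈ Set.Ico (0 : ℝ) 1,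
      ⟪gradient F (x + s • v), v⟫ ≤ ⟪gradient F x, v⟫ + K * s * ‖v‖ ^ 2 := by
    rintro s ⟨hs, -⟩
    have := calc ⟪gradient F (x + s • v) - gradient F x, v⟫
        ≤ ‖gradient F (x + s • v) - gradient F x‖ * ‖v‖ := real_inner_le_norm _ _
      _ ≤ K * ‖s • v‖ * ‖v‖ := by
        gcongr; simpa using hlip.norm_sub_le (x + s • v) x
      _ = K * s * ‖v‖ ^ 2 := by rw [norm_smul, Real.norm_of_nonneg hs]; ring
    rw [inner_sub_left] at this
    linarith
  have := image_le_of_deriv_right_le_deriv_boundary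
    (fun s _ => (hasDerivAt_comp_add_smul_gradient hF x v s).continuousAt.continuousWithinAt)
    (fun s _ => (hasDerivAt_comp_add_smul_gradient hF x v s).hasDerivWithinAt)
    (by simp) (fun s _ => (hB s).continuousAt.continuousWithinAt)
    (fun s _ => (hB s).hasDerivWithinAt) hbound (Set.right_mem_Icc.2 zero_le_one)
  simpa using this

theorem norm_gradient_sq_le (hF : Differentiable ℝ F) (hlip : LipschitzWith K (gradient F))
    (hK : K ≠ 0) {Fstar : ℝ} (hlb : ∀ x, Fstar ≤ F x) (x : E) :
    ‖gradient F x‖ ^ 2 ≤ 2 * K * (F x - Fstar) := by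
  have hK' : (0 : ℝ) < K := by positivity
  set v := -((K : ℝ)⁻¹ • gradient F x)
  have hinner : ⟪gradient F x, v⟫ = -(K : ℝ)⁻¹ * ‖gradient F x‖ ^ 2 := by
    rw [inner_neg_right, real_inner_smul_right, real_inner_self_eq_norm_sq]; ring
  have hnorm : ‖v‖ ^ 2 = (K : ℝ)⁻¹ ^ 2 * ‖gradient F x‖ ^ 2 := by
    rw [norm_neg, norm_smul, Real.norm_of_nonneg (inv_nonneg.2 hK'.le)]; ring
  have h := (hlb (x + v)).trans (image_add_le_of_lipschitzWith_gradient hF hlip x v)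
  rw [hinner, hnorm] at h
  field_simp at h
  linarith

theorem image_sub_smul_le_of_lipschitzWith_gradient (hF : Differentiable ℝ F)
    (hlip : LipschitzWith K (gradient F)) (η : ℝ) (x g : E) :
    F (x - η • g) ≤ F x - (η - K * η ^ 2 / 2) * ‖gradient F x‖ ^ 2
      + (K * η ^ 2 - η) * ⟪gradient F x, g - gradient F x⟫
      + K * η ^ 2 / 2 * ‖g - gradient F x‖ ^ 2 := by
  have h := image_add_le_of_lipschitzWith_gradient hF hlip x (-(η • g))
  have hg : g = gradient F x + (g - gradient F x) := (add_sub_cancel _ _).symm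
  rw [← sub_eq_add_neg, inner_neg_right, real_inner_smul_right, norm_neg, norm_smul, mul_pow,
    Real.norm_eq_abs, sq_abs, hg, inner_add_right, real_inner_self_eq_norm_sq,
    norm_add_sq_real, ← hg] at h
  linarith

end Smooth

section Stochastic

variable {E : Type*} [NormedAddCommGroup E] [InnerProductSpace ℝ E] [CompleteSpace E]
  {Ω : Type*} {m m₀ : MeasurableSpace Ω} {P : Measure Ω}

theorem integral_inner_eq_zero_of_condExp_eq_zero [IsFiniteMeasure P] {h d : Ω → E}
    (hm : m ≤ m₀) (hh : AEStronglyMeasurable[m] h P)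
    (hhd : Integrable (fun ω => ⟪h ω, d ω⟫) P) (hd : Integrable d P) (hd_cond : P[d | m] =ᵐ[P] 0) :
    ∫ ω, ⟪h ω, d ω⟫ ∂P = 0 := by
  rw [← integral_condExp hm, integral_eq_zero_of_ae]
  filter_upwards [condExp_bilin_of_aestronglyMeasurable_left (innerSL ℝ) hh hhd hd, hd_cond]
    with ω hω hcω
  exact hω.trans (by rw [hcω]; exact map_zero _)

variable [IsProbabilityMeasure P] {F : E → ℝ} {K : ℝ≥0} {x g : Ω → E} {η σ : ℝ}

theorem integral_comp_sub_smul_le_s9 (hF : Differentiable ℝ F)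
    (hlip : LipschitzWith K (gradient F)) (hm : m ≤ m₀) (hg : Integrable g P)
    (hgrad : Integrable (fun ω => ‖gradient F (x ω)‖ ^ 2) P)
    (hnoise : Integrable (fun ω => ‖g ω - gradient F (x ω)‖ ^ 2) P)
    (hFx : Integrable (fun ω => F (x ω)) P) (hFx' : Integrable (fun ω => F (x ω - η • g ω)) P)
    (hmean : P[g | m] =ᵐ[P] fun ω => gradient F (x ω))
    (hvar : ∀ᵐ ω ∂P, P[fun ω => ‖g ω - gradient F (x ω)‖ ^ 2 | m] ω ≤ σ ^ 2) :
    ∫ ω, F (x ω - η • g ω) ∂P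
      ≤ ∫ ω, F (x ω) ∂P - (η - K * η ^ 2 / 2) * ∫ ω, ‖gradient F (x ω)‖ ^ 2 ∂P
        + K * η ^ 2 / 2 * σ ^ 2 := by
  set h : Ω → E := fun ω => gradient F (x ω)
  set d : Ω → E := fun ω => g ω - gradient F (x ω)
  have hh_meas : AEStronglyMeasurable[m] h P :=
    ⟨P[g | m], stronglyMeasurable_condExp, hmean.symm⟩
  have hh2 : MemLp h 2 P := (memLp_two_iff_integrable_sq_norm (hh_meas.mono hm)).2 hgrad
  have hh1 : Integrable h P := hh2.integrable one_le_two
  have hd1 : Integrable d P := hg.sub hh1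
  have hd2 : MemLp d 2 P := (memLp_two_iff_integrable_sq_norm hd1.1).2 hnoise
  have hhd : Integrable (fun ω => ⟪h ω, d ω⟫) P :=
    memLp_one_iff_integrable.1 ((innerSL ℝ).memLp_of_bilin 1 hh2 hd2)
  have hd_cond : P[g - h | m] =ᵐ[P] 0 := by
    filter_upwards [condExp_sub hg hh1 m, hmean, condExp_of_aestronglyMeasurable' hm hh_meas hh1]
      with ω h1 h2 h3
    rw [h1, Pi.sub_apply, h2, h3, sub_self, Pi.zero_apply]
  have hcross : ∫ ω, ⟪h ω, d ω⟫ ∂P = 0 :=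
    integral_inner_eq_zero_of_condExp_eq_zero hm hh_meas hhd hd1 hd_cond
  have hnoise_le : ∫ ω, ‖d ω‖ ^ 2 ∂P ≤ σ ^ 2 := calc
    _ = ∫ ω, P[fun ω => ‖d ω‖ ^ 2 | m] ω ∂P := (integral_condExp hm).symm
    _ ≤ ∫ _, σ ^ 2 ∂P := integral_mono_ae integrable_condExp (integrable_const _) hvar
    _ = σ ^ 2 := by simp
  have hI₁ : Integrable (fun ω => F (x ω) - (η - K * η ^ 2 / 2) * ‖h ω‖ ^ 2) P :=
    hFx.sub (hgrad.const_mul _)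
  have hI₂ : Integrable (fun ω => F (x ω) - (η - K * η ^ 2 / 2) * ‖h ω‖ ^ 2
      + (K * η ^ 2 - η) * ⟪h ω, d ω⟫) P := hI₁.add (hhd.const_mul _)
  have hmono : ∫ ω, F (x ω - η • g ω) ∂P ≤ ∫ ω, (F (x ω) - (η - K * η ^ 2 / 2) * ‖h ω‖ ^ 2
      + (K * η ^ 2 - η) * ⟪h ω, d ω⟫ + K * η ^ 2 / 2 * ‖d ω‖ ^ 2) ∂P :=
    integral_mono hFx' (hI₂.add (hnoise.const_mul _))
      fun ω => image_sub_smul_le_of_lipschitzWith_gradient hF hlip η (x ω) (g ω)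
  rw [integral_add hI₂ (hnoise.const_mul _), integral_add hI₁ (hhd.const_mul _),
    integral_sub hFx (hgrad.const_mul _), integral_const_mul, integral_const_mul,
    integral_const_mul, hcross] at hmono
  nlinarith [mul_le_mul_of_nonneg_left hnoise_le (by positivity : (0 : ℝ) ≤ K * η ^ 2 / 2)]

variable {μ Fstar : ℝ}

theorem integral_comp_sub_smul_sub_le_of_pl (hF : Differentiable ℝ F)
    (hlip : LipschitzWith K (gradient F)) (hK : K ≠ 0) (hlb : ∀ x, Fstar ≤ F x) (hμ : 0 ≤ μ)
    (hPL : ∀ x, 2 * μ * (F x - Fstar) ≤ ‖gradient F x‖ ^ 2) (hη : 0 ≤ η) (hηK : η * K ≤ 1)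
    (hm : m ≤ m₀) (hg : Integrable g P)
    (hnoise : Integrable (fun ω => ‖g ω - gradient F (x ω)‖ ^ 2) P)
    (hFx : Integrable (fun ω => F (x ω)) P) (hFx' : Integrable (fun ω => F (x ω - η • g ω)) P)
    (hmean : P[g | m] =ᵐ[P] fun ω => gradient F (x ω))
    (hvar : ∀ᵐ ω ∂P, P[fun ω => ‖g ω - gradient F (x ω)‖ ^ 2 | m] ω ≤ σ ^ 2) :
    ∫ ω, F (x ω - η • g ω) ∂P - Fstar
      ≤ (1 - μ * η) * (∫ ω, F (x ω) ∂P - Fstar) + K * η ^ 2 * σ ^ 2 / 2 := by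
  have hgap_int : Integrable (fun ω => F (x ω) - Fstar) P := hFx.sub (integrable_const _)
  have hgrad : Integrable (fun ω => ‖gradient F (x ω)‖ ^ 2) P :=
    (hgap_int.const_mul (2 * K)).mono' ((integrable_condExp.1.congr hmean).norm.pow 2)
      (ae_of_all _ fun ω => by
        rw [Real.norm_of_nonneg (by positivity)]
        exact norm_gradient_sq_le hF hlip hK hlb (x ω))
  have hPL_int : 2 * μ * (∫ ω, F (x ω) ∂P - Fstar) ≤ ∫ ω, ‖gradient F (x ω)‖ ^ 2 ∂P := calc
    _ = ∫ ω, 2 * μ * (F (x ω) - Fstar) ∂P := by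
      rw [integral_const_mul, integral_sub hFx (integrable_const _)]; simp
    _ ≤ _ := integral_mono (hgap_int.const_mul _) hgrad fun ω => hPL (x ω)
  have hgap_nonneg : 0 ≤ ∫ ω, F (x ω) ∂P - Fstar := by
    simpa [integral_sub hFx (integrable_const _)] using
      integral_nonneg (μ := P) fun ω => sub_nonneg.2 (hlb (x ω))
  have hstep := integral_comp_sub_smul_le_s9 hF hlip hm hg hgrad hnoise hFx hFx' hmean hvar
  have hηK' : 0 ≤ η - K * η ^ 2 := by nlinarith
  nlinarith [mul_nonneg (by nlinarith : (0 : ℝ) ≤ η - K * η ^ 2 / 2) (sub_nonneg.2 hPL_int),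
    mul_nonneg (mul_nonneg hηK' hμ) hgap_nonneg]

/-- When `m` is not a sub-σ-algebra, `P[g | m]` is the junk value `0`, so `∇F ∘ x = 0` a.e. -/
theorem integral_comp_le_of_not_le (hμ : 0 < μ)
    (hPL : ∀ x, 2 * μ * (F x - Fstar) ≤ ‖gradient F x‖ ^ 2) (hm : ¬m ≤ m₀)
    (hFx : Integrable (fun ω => F (x ω)) P) (hmean : P[g | m] =ᵐ[P] fun ω => gradient F (x ω)) :
    ∫ ω, F (x ω) ∂P ≤ Fstar := calc
  _ ≤ ∫ _, Fstar ∂P := integral_mono_ae hFx (integrable_const _) <| by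
    filter_upwards [hmean] with ω hω
    have := hPL (x ω)
    rw [← hω, condExp_of_not_le hm, Pi.zero_apply, norm_zero] at this
    nlinarith
  _ = Fstar := by simp

end Stochastic

theorem strongly_convex_function_gap_general
    {E : Type*} [NormedAddCommGroup E] [InnerProductSpace ℝ E] [CompleteSpace E]
    [MeasurableSpace E]
    {Ωs : Type*} [MeasureSpace Ωs]
    (hprob : IsProbabilityMeasure (volume : Measure Ωs))
    (F : E → ℝ) (hF : Differentiable ℝ F)
    (L : ℝ) (hL : 0 < L)
    (hlip : ∀ x y : E, ‖gradient F x - gradient F y‖ ≤ L * ‖x - y‖)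
    (μ : ℝ) (hμ : 0 < μ)
    (Fstar : ℝ) (hlb : ∀ x, Fstar ≤ F x)
    (hPL : ∀ x : E, 2 * μ * (F x - Fstar) ≤ ‖gradient F x‖ ^ 2)
    (η : ℝ) (hη0 : 0 < η) (hηmin : η ≤ min (1 / L) (1 / (2 * μ)))
    (θ g : ℕ → Ωs → E) (σ : ℝ)
    (θ0 : E) (hθ0 : ∀ ω, θ 0 ω = θ0)
    (m : ℕ → MeasurableSpace Ωs)
    (hm : ∀ t, m t = ⨆ s ∈ Finset.range (t + 1), MeasurableSpace.comap (θ s) inferInstance)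
    (hupd : ∀ t, ∀ ω, θ (t + 1) ω = θ t ω - η • g t ω)
    (hg_int : ∀ t, Integrable (g t))
    (hgsq_int : ∀ t, Integrable (fun ω => ‖g t ω - gradient F (θ t ω)‖ ^ 2))
    (hF_int : ∀ t, Integrable (fun ω => F (θ t ω)))
    (hcond_mean : ∀ t,
      (volume[g t | m t]) =ᵐ[volume] fun ω => gradient F (θ t ω))
    (hcond_var : ∀ t,
      ∀ᵐ ω ∂(volume : Measure Ωs),
        (volume[fun ω' => ‖g t ω' - gradient F (θ t ω')‖ ^ 2 | m t]) ω ≤ σ ^ 2) :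
    ∀ t, (∫ ω, F (θ t ω)) - Fstar
      ≤ (1 - μ * η) ^ t * (F θ0 - Fstar) + L * η * σ ^ 2 / (2 * μ) := by
  intro n
  lift L to ℝ≥0 using hL.le
  have hlip' : LipschitzWith L (gradient F) :=
    LipschitzWith.of_dist_le_mul fun x y => by simpa only [dist_eq_norm] using hlip x y
  have hηL : η * L ≤ 1 := (le_div_iff₀ hL).1 (hηmin.trans (min_le_left _ _))
  have hημ : η * (2 * μ) ≤ 1 := (le_div_iff₀ (by positivity)).1 (hηmin.trans (min_le_right _ _))
  have hρ : 0 ≤ 1 - μ * η := by nlinarith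
  have hbias : 0 ≤ L * η * σ ^ 2 / (2 * μ) := by positivity
  by_cases hmn : m n ≤ ‹MeasureSpace Ωs›.toMeasurableSpace
  · rw [show F θ0 = ∫ ω, F (θ 0 ω) by simp [hθ0]]
    refine le_pow_mul_add_of_forall_lt_succ_le (a := fun t => (∫ ω, F (θ t ω)) - Fstar)
      (c := L * η ^ 2 * σ ^ 2 / 2) (n := n) hρ hbias
      (le_of_eq (by field_simp; ring)) fun t ht => ?_
    have hmt : m t ≤ m n := by
      rw [hm t, hm n]
      exact biSup_mono fun s hs =>
        Finset.mem_range.2 ((Finset.mem_range.1 hs).trans_le (by omega))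
    simp only [hupd]
    exact integral_comp_sub_smul_sub_le_of_pl hF hlip' (NNReal.coe_pos.1 hL).ne' hlb hμ.le hPL
      hη0.le hηL (hmt.trans hmn) (hg_int t) (hgsq_int t) (hF_int t)
      (by simpa only [hupd] using hF_int (t + 1)) (hcond_mean t) (hcond_var t)
  · have hgap := integral_comp_le_of_not_le hμ hPL hmn (hF_int n) (hcond_mean n)
    have := mul_nonneg (pow_nonneg hρ n) (sub_nonneg.2 (hlb θ0))
    linarith

/-- Unrolled function-gap bound in the strongly convex (PL) convergence theorem:
under the PL inequality with constant `μ > 0`, `L`-Lipschitz gradient, step size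
`0 < η ≤ min(1/L, 1/(2μ))`, conditionally unbiased stochastic gradients with
conditional variance at most `σ²`, and deterministic initialization `θ^0`,
`E[F(θ^t)] - F* ≤ (1 - μη)^t (F(θ^0) - F*) + L η σ² / (2μ)` for all `t`. -/
theorem strongly_convex_function_gap
    {E : Type*} [NormedAddCommGroup E] [InnerProductSpace ℝ E] [CompleteSpace E]
    [MeasurableSpace E] [BorelSpace E]
    {Ωs : Type*} [MeasureSpace Ωs]
    (hprob : IsProbabilityMeasure (volume : Measure Ωs))
    (F : E → ℝ) (hF : Differentiable ℝ F)
    (L : ℝ) (hL : 0 < L)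
    (hlip : ∀ x y : E, ‖gradient F x - gradient F y‖ ≤ L * ‖x - y‖)
    (μ : ℝ) (hμ : 0 < μ)
    (Fstar : ℝ) (hlb : ∀ x, Fstar ≤ F x) (hattain : ∃ x, F x = Fstar)
    (hPL : ∀ x : E, 2 * μ * (F x - Fstar) ≤ ‖gradient F x‖ ^ 2)
    (η : ℝ) (hη0 : 0 < η) (hηmin : η ≤ min (1 / L) (1 / (2 * μ)))
    (θ g : ℕ → Ωs → E) (σ : ℝ)
    (θ0 : E) (hθ0 : ∀ ω, θ 0 ω = θ0)
    (m : ℕ → MeasurableSpace Ωs)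
    (hm : ∀ t, m t = ⨆ s ∈ Finset.range (t + 1), MeasurableSpace.comap (θ s) inferInstance)
    (hupd : ∀ t, ∀ ω, θ (t + 1) ω = θ t ω - η • g t ω)
    (hg_int : ∀ t, Integrable (g t))
    (hgsq_int : ∀ t, Integrable (fun ω => ‖g t ω - gradient F (θ t ω)‖ ^ 2))
    (hF_int : ∀ t, Integrable (fun ω => F (θ t ω)))
    (hcond_mean : ∀ t,
      (volume[g t | m t]) =ᵐ[volume] fun ω => gradient F (θ t ω))
    (hcond_var : ∀ t,
      ∀ᵐ ω ∂(volume : Measure Ωs),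
        (volume[fun ω' => ‖g t ω' - gradient F (θ t ω')‖ ^ 2 | m t]) ω ≤ σ ^ 2) :
    ∀ t, (∫ ω, F (θ t ω)) - Fstar
      ≤ (1 - μ * η) ^ t * (F θ0 - Fstar) + L * η * σ ^ 2 / (2 * μ) :=
  strongly_convex_function_gap_general hprob F hF L hL hlip μ hμ Fstar hlb hPL η hη0 hηmin θ g σ θ0
    hθ0 m hm hupd hg_int hgsq_int hF_int hcond_mean hcond_var
end
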